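/- Let s ∈ (0, 1) with s ≠ 1/2, and assume that either s > 1/2 or t₁(s) = 7 + 3^{3−2s} − 2^{5−2s} ≤ 0 (i.e. s lies in [s₀, 1) where s₀ is the unique zero of t₁ in (0,1/2)). Let h > 0, let N ≥ 2 be an integer, and let S be the (N−1)×(N−1) matrix with entries S_{kj} = A_s h^{1−2s} t_{|k−j|}(s). Then for all 1 ≤ k, j ≤ N−1: S_{kk} > 0; S_{kj} ≤ 0 for k ≠ j, with S_{kj} < 0 whenever |k−j| ≥ 2, and S_{kj} < 0 also when |k−j| = 1 provided t₁(s) ≠ 0; and S is strictly diagonally dominant: S_{kk} > Σ_{j≠k} |S_{kj}| for every 1 ≤ k ≤ N−1. -/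

import Mathlib

/-- `t_p(s)`, with the convention `0^(3-2s) = 0` (automatic for `rpow`). -/
noncomputable def tFn (s : ℝ) (p : ℕ) : ℝ :=
  |(p : ℝ) - 2| ^ (3 - 2 * s) - 4 * |(p : ℝ) - 1| ^ (3 - 2 * s) + 6 * (p : ℝ) ^ (3 - 2 * s)
    - 4 * ((p : ℝ) + 1) ^ (3 - 2 * s) + ((p : ℝ) + 2) ^ (3 - 2 * s)

/-- `t₁(s) = 7 + 3^(3-2s) - 2^(5-2s)`. -/
noncomputable def t1 (s : ℝ) : ℝ := 7 + (3 : ℝ) ^ (3 - 2 * s) - (2 : ℝ) ^ (5 - 2 * s)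

/-- `A_s = 1/(2 Γ(4-2s) cos(sπ))`. -/
noncomputable def Acoef (s : ℝ) : ℝ := 1 / (2 * Real.Gamma (4 - 2 * s) * Real.cos (s * Real.pi))

/-!
With `α = 3 - 2s`, `tFn s p` is the fourth central difference of `x ↦ |x| ^ α` at `p`, that
is `D p - D (p - 1)` for the third difference `D = thirdDiff (|·| ^ α)`. As `|x| ^ α` is
even, `D (-x - 1) = -D x`, so the `k`-th row sum of `S` telescopes to
`A_s h^(1-2s) (D k + D (N - 2 - k))`; the off-diagonal entries being nonpositive, a positive
row sum is strict diagonal dominance.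

On `[0, ∞)` the second difference `F x = (x + 2) ^ α - 2 (x + 1) ^ α + x ^ α` has derivative
`α` times the second difference for the exponent `α - 1`, and second differences of `x ^ β`
have the sign given by the convexity of `x ^ β`. Hence for `α ∈ (2, 3)` `F` is increasing and
concave, which gives `D M > 0` for `M ≥ 1` and `t_p < 0` for `p ≥ 2`; for `α ∈ (1, 2)` all
these signs flip, together with the sign of `cos (sπ)` in `A_s`. Moreover `D 0 = 2 ^ α - 4`
and `t_0 = 2 D 0`. Finally `t_1 = 7 + 3 ^ α - 4 · 2 ^ α` is positive for `α < 2` because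
`2 ^ (-α) t_1 = 7 (1/2) ^ α + (3/2) ^ α - 4` is convex in `α`, vanishes at `α = 2` and has
negative derivative there.
-/

open Real Set Finset

lemma StrictConvexOn.two_mul_lt_add {D : Set ℝ} {f : ℝ → ℝ} (hf : StrictConvexOn ℝ D f)
    {x : ℝ} (hx : x ∈ D) (hx2 : x + 2 ∈ D) : 2 * f (x + 1) < f x + f (x + 2) := by
  have h := hf.2 hx hx2 (by linarith) (by norm_num : (0 : ℝ) < 1 / 2)
    (by norm_num : (0 : ℝ) < 1 / 2) (by norm_num)
  simp only [smul_eq_mul] at h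
  rw [show 1 / 2 * x + 1 / 2 * (x + 2) = x + 1 by ring] at h
  linarith

lemma StrictConcaveOn.add_lt_two_mul {D : Set ℝ} {f : ℝ → ℝ} (hf : StrictConcaveOn ℝ D f)
    {x : ℝ} (hx : x ∈ D) (hx2 : x + 2 ∈ D) : f x + f (x + 2) < 2 * f (x + 1) := by
  have := hf.neg.two_mul_lt_add hx hx2
  simp only [Pi.neg_apply] at this
  linarith

lemma strictConvexOn_rpow_of_neg {β : ℝ} (hβ : β < 0) :
    StrictConvexOn ℝ (Ioi 0) fun x : ℝ ↦ x ^ β := by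
  refine strictConvexOn_of_deriv2_pos (convex_Ioi 0)
    (fun x hx ↦ (continuousAt_rpow_const x β (Or.inl (ne_of_gt hx))).continuousWithinAt) ?_
  intro x hx
  rw [interior_Ioi] at hx
  rw [iter_deriv_rpow_const]
  have : (descPochhammer ℝ 2).eval β = β * (β - 1) := by simp [descPochhammer_succ_right]
  rw [this]
  exact mul_pos (mul_pos_of_neg_of_neg hβ (by linarith)) (rpow_pos_of_pos hx _)

noncomputable def rpowSecondDiff (β x : ℝ) : ℝ := (x + 2) ^ β - 2 * (x + 1) ^ β + x ^ β

section rpowSecondDiff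

variable {β x : ℝ}

lemma rpowSecondDiff_pos_of_neg (hβ : β < 0) (hx : 0 < x) : 0 < rpowSecondDiff β x := by
  have := (strictConvexOn_rpow_of_neg hβ).two_mul_lt_add hx (show 0 < x + 2 by linarith)
  unfold rpowSecondDiff
  linarith

lemma rpowSecondDiff_pos_of_one_lt (hβ : 1 < β) (hx : 0 ≤ x) : 0 < rpowSecondDiff β x := by
  have := (strictConvexOn_rpow hβ).two_mul_lt_add hx (show 0 ≤ x + 2 by linarith)
  unfold rpowSecondDiff
  linarith

lemma rpowSecondDiff_neg (hβ₀ : 0 < β) (hβ₁ : β < 1) (hx : 0 ≤ x) :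
    rpowSecondDiff β x < 0 := by
  have := (strictConcaveOn_rpow hβ₀ hβ₁).add_lt_two_mul hx (show 0 ≤ x + 2 by linarith)
  unfold rpowSecondDiff
  linarith

lemma hasDerivAt_rpowSecondDiff (β : ℝ) (hx : 0 < x) :
    HasDerivAt (rpowSecondDiff β) (β * rpowSecondDiff (β - 1) x) x := by
  have hpow {c : ℝ} (hc : 0 ≤ c) :
      HasDerivAt (fun y ↦ (y + c) ^ β) (β * (x + c) ^ (β - 1)) x :=
    (hasDerivAt_rpow_const (Or.inl (by linarith : x + c ≠ 0))).comp_add_const x c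
  have := ((hpow zero_le_two).sub ((hpow zero_le_one).const_mul 2)).add
    (hasDerivAt_rpow_const (p := β) (Or.inl hx.ne'))
  refine HasDerivAt.congr_deriv (f := rpowSecondDiff β) this ?_
  unfold rpowSecondDiff
  ring

lemma continuousOn_rpowSecondDiff (hβ : 0 ≤ β) : ContinuousOn (rpowSecondDiff β) (Ici 0) := by
  unfold rpowSecondDiff
  fun_prop (disch := exact Or.inr hβ)

lemma deriv_rpowSecondDiff (β : ℝ) (hx : 0 < x) :
    deriv (rpowSecondDiff β) x = β * rpowSecondDiff (β - 1) x :=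
  (hasDerivAt_rpowSecondDiff β hx).deriv

lemma strictMonoOn_rpowSecondDiff (hβ : 0 < β)
    (h : ∀ x, 0 < x → 0 < rpowSecondDiff (β - 1) x) :
    StrictMonoOn (rpowSecondDiff β) (Ici 0) := by
  refine strictMonoOn_of_deriv_pos (convex_Ici 0) (continuousOn_rpowSecondDiff hβ.le) ?_
  rw [interior_Ici]
  intro x hx
  rw [deriv_rpowSecondDiff β hx]
  exact mul_pos hβ (h x hx)

lemma strictAntiOn_rpowSecondDiff (hβ : 0 < β)
    (h : ∀ x, 0 < x → rpowSecondDiff (β - 1) x < 0) :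
    StrictAntiOn (rpowSecondDiff β) (Ici 0) := by
  refine strictAntiOn_of_deriv_neg (convex_Ici 0) (continuousOn_rpowSecondDiff hβ.le) ?_
  rw [interior_Ici]
  intro x hx
  rw [deriv_rpowSecondDiff β hx]
  exact mul_neg_of_pos_of_neg hβ (h x hx)

lemma strictConvexOn_rpowSecondDiff (hβ : 1 < β)
    (h : ∀ x, 0 < x → 0 < rpowSecondDiff (β - 2) x) :
    StrictConvexOn ℝ (Ici 0) (rpowSecondDiff β) := by
  have hmono : StrictMonoOn (rpowSecondDiff (β - 1)) (Ioi 0) :=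
    (strictMonoOn_rpowSecondDiff (by linarith) (by rwa [sub_sub, one_add_one_eq_two])).mono
      Ioi_subset_Ici_self
  refine StrictMonoOn.strictConvexOn_of_deriv (convex_Ici 0)
    (continuousOn_rpowSecondDiff (by linarith)) ?_
  rw [interior_Ici]
  intro x hx y hy hxy
  rw [deriv_rpowSecondDiff β hx, deriv_rpowSecondDiff β hy]
  exact mul_lt_mul_of_pos_left (hmono hx hy hxy) (by linarith)

lemma strictConcaveOn_rpowSecondDiff (hβ : 1 < β)
    (h : ∀ x, 0 < x → rpowSecondDiff (β - 2) x < 0) :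
    StrictConcaveOn ℝ (Ici 0) (rpowSecondDiff β) := by
  have hanti : StrictAntiOn (rpowSecondDiff (β - 1)) (Ioi 0) :=
    (strictAntiOn_rpowSecondDiff (by linarith) (by rwa [sub_sub, one_add_one_eq_two])).mono
      Ioi_subset_Ici_self
  refine StrictAntiOn.strictConcaveOn_of_deriv (convex_Ici 0)
    (continuousOn_rpowSecondDiff (by linarith)) ?_
  rw [interior_Ici]
  intro x hx y hy hxy
  rw [deriv_rpowSecondDiff β hx, deriv_rpowSecondDiff β hy]
  exact mul_lt_mul_of_pos_left (hanti hx hy hxy) (by linarith)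

end rpowSecondDiff

def thirdDiff (f : ℝ → ℝ) (x : ℝ) : ℝ := f (x + 2) - 3 * f (x + 1) + 3 * f x - f (x - 1)

section thirdDiff

variable {f : ℝ → ℝ}

lemma Function.Even.thirdDiff_neg_sub_one (hf : f.Even) (x : ℝ) :
    thirdDiff f (-x - 1) = -thirdDiff f x := by
  unfold thirdDiff
  rw [show -x - 1 + 2 = -(x - 1) by ring, show -x - 1 + 1 = -x by ring,
    show -x - 1 - 1 = -(x + 2) by ring, show -x - 1 = -(x + 1) by ring]
  rw [hf (x - 1), hf x, hf (x + 2), hf (x + 1)]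
  ring

lemma Function.Even.thirdDiff_sub_thirdDiff_neg (hf : f.Even) (x : ℝ) :
    thirdDiff f (-x) - thirdDiff f (-x - 1) = thirdDiff f x - thirdDiff f (x - 1) := by
  have h := hf.thirdDiff_neg_sub_one (-x)
  rw [neg_neg] at h
  rw [hf.thirdDiff_neg_sub_one x, h]
  ring

lemma Function.Even.sum_range_thirdDiff_sub (hf : f.Even) (k n : ℕ) :
    ∑ j ∈ range n, (thirdDiff f (k - j) - thirdDiff f (k - j - 1))
      = thirdDiff f k + thirdDiff f (n - 1 - k) := by
  have h := sum_range_sub' (fun j : ℕ ↦ thirdDiff f (k - j)) n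
  simp only [Nat.cast_add, Nat.cast_one, Nat.cast_zero, sub_add_eq_sub_sub, sub_zero] at h
  have hodd := hf.thirdDiff_neg_sub_one ((n : ℝ) - 1 - k)
  rw [show -((n : ℝ) - 1 - k) - 1 = k - n by ring] at hodd
  rw [h, hodd]
  ring

end thirdDiff

lemma even_abs_rpow (α : ℝ) : Function.Even fun x : ℝ ↦ |x| ^ α :=
  fun x ↦ by simp only [abs_neg]

section absRpow

variable {α x : ℝ}

lemma thirdDiff_abs_rpow_zero (hα : α ≠ 0) : thirdDiff (fun x ↦ |x| ^ α) 0 = 2 ^ α - 4 := by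
  norm_num [thirdDiff, zero_rpow hα]
  ring

lemma thirdDiff_abs_rpow_of_one_le (hx : 1 ≤ x) :
    thirdDiff (fun x ↦ |x| ^ α) x = rpowSecondDiff α x - rpowSecondDiff α (x - 1) := by
  simp only [thirdDiff, rpowSecondDiff]
  rw [abs_of_nonneg (by linarith : 0 ≤ x + 2), abs_of_nonneg (by linarith : 0 ≤ x + 1),
    abs_of_nonneg (by linarith : 0 ≤ x), abs_of_nonneg (by linarith : 0 ≤ x - 1),
    sub_add_cancel, show x - 1 + 2 = x + 1 by ring]
  ring

end absRpow

section tFn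

variable (s : ℝ)

lemma tFn_natCast (p : ℕ) :
    tFn s p = thirdDiff (fun x ↦ |x| ^ (3 - 2 * s)) p
      - thirdDiff (fun x ↦ |x| ^ (3 - 2 * s)) (p - 1) := by
  have hp : (0 : ℝ) ≤ p := p.cast_nonneg
  simp only [tFn, thirdDiff]
  rw [show (p : ℝ) - 1 + 2 = p + 1 by ring, sub_add_cancel,
    show (p : ℝ) - 1 - 1 = p - 2 by ring,
    abs_of_nonneg hp, abs_of_nonneg (by linarith : (0 : ℝ) ≤ p + 1),
    abs_of_nonneg (by linarith : (0 : ℝ) ≤ p + 2)]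
  ring

lemma tFn_natAbs (i : ℤ) :
    tFn s i.natAbs = thirdDiff (fun x ↦ |x| ^ (3 - 2 * s)) i
      - thirdDiff (fun x ↦ |x| ^ (3 - 2 * s)) (i - 1) := by
  rw [tFn_natCast, Nat.cast_natAbs, Int.cast_abs]
  rcases abs_choice (i : ℝ) with h | h <;> rw [h]
  exact (even_abs_rpow _).thirdDiff_sub_thirdDiff_neg _

lemma sum_range_tFn_natAbs (k n : ℕ) :
    ∑ j ∈ range n, tFn s ((k : ℤ) - j).natAbs
      = thirdDiff (fun x ↦ |x| ^ (3 - 2 * s)) k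
        + thirdDiff (fun x ↦ |x| ^ (3 - 2 * s)) (n - 1 - k) := by
  simp only [tFn_natAbs, Int.cast_sub, Int.cast_natCast]
  exact (even_abs_rpow _).sum_range_thirdDiff_sub k n

lemma tFn_zero : tFn s 0 = 2 * thirdDiff (fun x ↦ |x| ^ (3 - 2 * s)) 0 := by
  have h := (even_abs_rpow (3 - 2 * s)).thirdDiff_neg_sub_one 0
  rw [neg_zero, zero_sub] at h
  have h0 := tFn_natCast s 0
  rw [Nat.cast_zero, zero_sub] at h0
  rw [h0, h]
  ring

lemma tFn_add_two (q : ℕ) :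
    tFn s (q + 2) = rpowSecondDiff (3 - 2 * s) q + rpowSecondDiff (3 - 2 * s) (q + 2)
      - 2 * rpowSecondDiff (3 - 2 * s) (q + 1) := by
  have hq : (1 : ℝ) ≤ q + 1 := by linarith [q.cast_nonneg (α := ℝ)]
  rw [tFn_natCast, Nat.cast_add, Nat.cast_two, show (q : ℝ) + 2 - 1 = q + 1 by ring,
    thirdDiff_abs_rpow_of_one_le hq, thirdDiff_abs_rpow_of_one_le (by linarith),
    show (q : ℝ) + 2 - 1 = q + 1 by ring, add_sub_cancel_right]
  ring

lemma tFn_one (hs : s < 3 / 2) : tFn s 1 = t1 s := by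
  have h2 : (2 : ℝ) ^ (5 - 2 * s) = 4 * 2 ^ (3 - 2 * s) := by
    rw [show 5 - 2 * s = 2 + (3 - 2 * s) by ring, rpow_add two_pos]
    norm_num
  norm_num [tFn, t1, zero_rpow (by linarith : 3 - 2 * s ≠ 0), h2]
  ring

end tFn

section signs

variable {α : ℝ}

lemma four_lt_two_rpow (hα : 2 < α) : (4 : ℝ) < 2 ^ α :=
  calc (4 : ℝ) = 2 ^ (2 : ℝ) := by norm_num
    _ < 2 ^ α := rpow_lt_rpow_of_exponent_lt one_lt_two hα

lemma two_rpow_lt_four (hα : α < 2) : (2 : ℝ) ^ α < 4 :=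
  calc (2 : ℝ) ^ α < 2 ^ (2 : ℝ) := rpow_lt_rpow_of_exponent_lt one_lt_two hα
    _ = 4 := by norm_num

lemma thirdDiff_abs_rpow_natCast_pos (h2 : 2 < α) (h3 : α < 3) (M : ℕ) :
    0 < thirdDiff (fun x ↦ |x| ^ α) M := by
  rcases M.eq_zero_or_pos with rfl | hM
  · rw [Nat.cast_zero, thirdDiff_abs_rpow_zero (by linarith)]
    linarith [four_lt_two_rpow h2]
  have hM1 : (1 : ℝ) ≤ M := by exact_mod_cast hM
  rw [thirdDiff_abs_rpow_of_one_le hM1, sub_pos]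
  exact strictMonoOn_rpowSecondDiff (by linarith)
    (fun x hx ↦ rpowSecondDiff_pos_of_one_lt (by linarith) hx.le)
    (mem_Ici.2 (by linarith)) (mem_Ici.2 (by linarith)) (by linarith)

lemma thirdDiff_abs_rpow_natCast_neg (h1 : 1 < α) (h2 : α < 2) (M : ℕ) :
    thirdDiff (fun x ↦ |x| ^ α) M < 0 := by
  rcases M.eq_zero_or_pos with rfl | hM
  · rw [Nat.cast_zero, thirdDiff_abs_rpow_zero (by linarith)]
    linarith [two_rpow_lt_four h2]
  have hM1 : (1 : ℝ) ≤ M := by exact_mod_cast hM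
  rw [thirdDiff_abs_rpow_of_one_le hM1, sub_neg]
  exact strictAntiOn_rpowSecondDiff (by linarith)
    (fun x hx ↦ rpowSecondDiff_neg (by linarith) (by linarith) hx.le)
    (mem_Ici.2 (by linarith)) (mem_Ici.2 (by linarith)) (by linarith)

end signs

section regimes

variable {s : ℝ}

lemma Acoef_pos (hs₀ : 0 < s) (hs : s < 1 / 2) : 0 < Acoef s := by
  have hΓ : 0 < Gamma (4 - 2 * s) := Gamma_pos_of_pos (by linarith)
  have hcos : 0 < cos (s * π) :=
    cos_pos_of_mem_Ioo ⟨by nlinarith [pi_pos], by nlinarith [pi_pos]⟩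
  unfold Acoef
  positivity

lemma Acoef_neg (hs : 1 / 2 < s) (hs₁ : s < 1) : Acoef s < 0 := by
  have hΓ : 0 < Gamma (4 - 2 * s) := Gamma_pos_of_pos (by linarith)
  have hcos : cos (s * π) < 0 :=
    cos_neg_of_pi_div_two_lt_of_lt (by nlinarith [pi_pos]) (by nlinarith [pi_pos])
  unfold Acoef
  exact one_div_neg.2 (mul_neg_of_pos_of_neg (by positivity) hcos)

lemma tFn_add_two_neg (hs₀ : 0 < s) (hs : s < 1 / 2) (q : ℕ) : tFn s (q + 2) < 0 := by
  have hq : (0 : ℝ) ≤ q := q.cast_nonneg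
  have hconc := strictConcaveOn_rpowSecondDiff (β := 3 - 2 * s) (by linarith)
    fun x hx ↦ rpowSecondDiff_neg (by linarith) (by linarith) hx.le
  have := hconc.add_lt_two_mul (x := q) hq (show (0 : ℝ) ≤ q + 2 by linarith)
  rw [tFn_add_two]
  linarith

lemma tFn_add_two_pos (hs : 1 / 2 < s) (hs₁ : s < 1) (q : ℕ) : 0 < tFn s (q + 2) := by
  have hq : (0 : ℝ) ≤ q := q.cast_nonneg
  have hconv := strictConvexOn_rpowSecondDiff (β := 3 - 2 * s) (by linarith)
    fun x hx ↦ rpowSecondDiff_pos_of_neg (by linarith) hx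
  have := hconv.two_mul_lt_add (x := q) hq (show (0 : ℝ) ≤ q + 2 by linarith)
  rw [tFn_add_two]
  linarith

end regimes

lemma four_lt_seven_mul_half_rpow_add {a : ℝ} (ha : a < 2) :
    4 < 7 * (1 / 2 : ℝ) ^ a + (3 / 2 : ℝ) ^ a := by
  set φ : ℝ → ℝ := fun a ↦ 7 * (1 / 2 : ℝ) ^ a + (3 / 2 : ℝ) ^ a
  have hconv : ConvexOn ℝ univ φ :=
    ((convexOn_rpow_left (by norm_num)).smul (by norm_num)).add (convexOn_rpow_left (by norm_num))
  have hderiv : HasDerivAt φ (7 * ((1 / 2 : ℝ) ^ (2 : ℝ) * log (1 / 2))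
      + (3 / 2 : ℝ) ^ (2 : ℝ) * log (3 / 2)) 2 :=
    ((hasStrictDerivAt_const_rpow (by norm_num) 2).hasDerivAt.const_mul 7).add
      (hasStrictDerivAt_const_rpow (by norm_num) 2).hasDerivAt
  have hslope := hconv.slope_le_of_hasDerivAt (mem_univ a) (mem_univ 2) ha hderiv
  -- the tangent at `a = 2` has negative slope because `3 ^ 9 < 2 ^ 16`
  have hlog : 9 * log 3 < 16 * log 2 := by
    have := log_lt_log (by positivity) (show (3 : ℝ) ^ 9 < 2 ^ 16 by norm_num)
    rwa [log_pow, log_pow] at this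
  rw [slope_def_field] at hslope
  simp only [φ, rpow_two, one_div, log_inv, log_div (by norm_num : (3 : ℝ) ≠ 0) two_ne_zero]
    at hslope
  have hφ : 7 * (2 : ℝ)⁻¹ ^ 2 + (3 / 2) ^ 2 = 4 := by norm_num
  rw [hφ, div_le_iff₀ (by linarith)] at hslope
  nlinarith

lemma t1_pos {s : ℝ} (hs : 1 / 2 < s) : 0 < t1 s := by
  set α := 3 - 2 * s
  have h1 : (2 : ℝ) ^ α * (1 / 2) ^ α = 1 := by rw [← mul_rpow] <;> norm_num
  have h3 : (2 : ℝ) ^ α * (3 / 2) ^ α = 3 ^ α := by rw [← mul_rpow] <;> norm_num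
  have h5 : (2 : ℝ) ^ (5 - 2 * s) = 4 * 2 ^ α := by
    rw [show 5 - 2 * s = 2 + α by ring, rpow_add two_pos]
    norm_num
  have hsplit : t1 s = 2 ^ α * (7 * (1 / 2 : ℝ) ^ α + (3 / 2 : ℝ) ^ α - 4) := by
    rw [t1, h5]
    linear_combination (-7) * h1 - h3
  rw [hsplit]
  exact mul_pos (rpow_pos_of_pos two_pos _)
    (sub_pos.2 (four_lt_seven_mul_half_rpow_add (by linarith)))

section product

variable {s : ℝ} (hs : s ∈ Ioo (0 : ℝ) 1) (hs' : s ≠ 1 / 2)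
include hs hs'

lemma Acoef_mul_thirdDiff_abs_rpow_natCast_pos (M : ℕ) :
    0 < Acoef s * thirdDiff (fun x ↦ |x| ^ (3 - 2 * s)) M := by
  rcases hs'.lt_or_gt with h | h
  · exact mul_pos (Acoef_pos hs.1 h)
      (thirdDiff_abs_rpow_natCast_pos (by linarith) (by linarith [hs.1]) M)
  · exact mul_pos_of_neg_of_neg (Acoef_neg h hs.2)
      (thirdDiff_abs_rpow_natCast_neg (by linarith [hs.2]) (by linarith) M)

lemma Acoef_mul_tFn_zero_pos : 0 < Acoef s * tFn s 0 := by
  have := Acoef_mul_thirdDiff_abs_rpow_natCast_pos hs hs' 0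
  rw [Nat.cast_zero] at this
  rw [tFn_zero, mul_left_comm]
  exact mul_pos two_pos this

lemma Acoef_mul_tFn_add_two_neg (q : ℕ) : Acoef s * tFn s (q + 2) < 0 := by
  rcases hs'.lt_or_gt with h | h
  · exact mul_neg_of_pos_of_neg (Acoef_pos hs.1 h) (tFn_add_two_neg hs.1 h q)
  · exact mul_neg_of_neg_of_pos (Acoef_neg h hs.2) (tFn_add_two_pos h hs.2 q)

lemma Acoef_mul_t1_neg (hrange : 1 / 2 < s ∨ t1 s ≤ 0) (ht : t1 s ≠ 0) :
    Acoef s * t1 s < 0 := by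
  rcases hs'.lt_or_gt with h | h
  · exact mul_neg_of_pos_of_neg (Acoef_pos hs.1 h)
      (lt_of_le_of_ne (hrange.resolve_left (by linarith)) ht)
  · exact mul_neg_of_neg_of_pos (Acoef_neg h hs.2) (t1_pos h)

lemma Acoef_mul_tFn_nonpos (hrange : 1 / 2 < s ∨ t1 s ≤ 0) {p : ℕ} (hp : 1 ≤ p) :
    Acoef s * tFn s p ≤ 0 := by
  obtain rfl | ⟨q, rfl⟩ : p = 1 ∨ ∃ q, p = q + 2 := by
    rcases Nat.exists_eq_add_of_le' hp with ⟨q, rfl⟩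
    rcases q with _ | q
    · exact Or.inl rfl
    · exact Or.inr ⟨q, rfl⟩
  · rw [tFn_one s (by linarith [hs.2])]
    rcases eq_or_ne (t1 s) 0 with ht | ht
    · rw [ht, mul_zero]
    · exact (Acoef_mul_t1_neg hs hs' hrange ht).le
  · exact (Acoef_mul_tFn_add_two_neg hs hs' q).le

lemma Acoef_mul_sum_range_tFn_natAbs_pos {k n : ℕ} (hk : k < n) :
    0 < Acoef s * ∑ j ∈ range n, tFn s ((k : ℤ) - j).natAbs := by
  have hm : (n : ℝ) - 1 - k = ((n - 1 - k : ℕ) : ℝ) := by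
    rw [Nat.sub_sub, Nat.cast_sub (by omega), Nat.cast_add, Nat.cast_one]
    ring
  rw [sum_range_tFn_natAbs, hm, mul_add]
  exact add_pos (Acoef_mul_thirdDiff_abs_rpow_natCast_pos hs hs' k)
    (Acoef_mul_thirdDiff_abs_rpow_natCast_pos hs hs' _)

end product

lemma sum_abs_filter_ne_lt {ι G : Type*} [Fintype ι] [DecidableEq ι] [AddCommGroup G]
    [LinearOrder G] [IsOrderedAddMonoid G] {a : ι → G} {k : ι}
    (hoff : ∀ j, j ≠ k → a j ≤ 0) (hsum : 0 < ∑ j, a j) :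
    ∑ j ∈ univ.filter (· ≠ k), |a j| < a k := by
  rw [← add_sum_erase _ _ (mem_univ k), ← filter_ne'] at hsum
  rw [sum_congr rfl fun j hj ↦ abs_of_nonpos (hoff j (mem_filter.1 hj).2), sum_neg_distrib]
  exact neg_lt_iff_pos_add.2 hsum

theorem stmt12_general (s : ℝ) (hs : s ∈ Set.Ioo (0 : ℝ) 1) (hs' : s ≠ 1 / 2)
    (hrange : 1 / 2 < s ∨ t1 s ≤ 0)
    (h : ℝ) (hh : 0 < h) (N : ℕ)
    (S : Matrix (Fin (N - 1)) (Fin (N - 1)) ℝ)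
    (hS : ∀ k j, S k j =
      Acoef s * h ^ (1 - 2 * s) * tFn s (((k : ℕ) : ℤ) - ((j : ℕ) : ℤ)).natAbs) :
    (∀ k, 0 < S k k) ∧
    (∀ k j, k ≠ j → S k j ≤ 0) ∧
    (∀ k j : Fin (N - 1), 2 ≤ (((k : ℕ) : ℤ) - ((j : ℕ) : ℤ)).natAbs → S k j < 0) ∧
    (∀ k j : Fin (N - 1), (((k : ℕ) : ℤ) - ((j : ℕ) : ℤ)).natAbs = 1 → t1 s ≠ 0 → S k j < 0) ∧
    (∀ k, ∑ j ∈ Finset.univ.filter (fun j => j ≠ k), |S k j| < S k k) := by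
  have hc : 0 < h ^ (1 - 2 * s) := rpow_pos_of_pos hh _
  have hS' (k j : Fin (N - 1)) : S k j =
      h ^ (1 - 2 * s) * (Acoef s * tFn s (((k : ℕ) : ℤ) - ((j : ℕ) : ℤ)).natAbs) := by
    rw [hS]; ring
  have hoff (k j : Fin (N - 1)) (hkj : k ≠ j) : S k j ≤ 0 := by
    rw [hS']
    exact mul_nonpos_of_nonneg_of_nonpos hc.le
      (Acoef_mul_tFn_nonpos hs hs' hrange (by have := Fin.val_ne_of_ne hkj; omega))
  refine ⟨fun k ↦ ?_, hoff, fun k j hkj ↦ ?_, fun k j hkj ht ↦ ?_, fun k ↦ ?_⟩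
  · rw [hS', sub_self, Int.natAbs_zero]
    exact mul_pos hc (Acoef_mul_tFn_zero_pos hs hs')
  · obtain ⟨q, hq⟩ := Nat.exists_eq_add_of_le' hkj
    rw [hS', hq]
    exact mul_neg_of_pos_of_neg hc (Acoef_mul_tFn_add_two_neg hs hs' q)
  · rw [hS', hkj, tFn_one s (by linarith [hs.2])]
    exact mul_neg_of_pos_of_neg hc (Acoef_mul_t1_neg hs hs' hrange ht)
  · refine sum_abs_filter_ne_lt (fun j hj ↦ hoff k j hj.symm) ?_
    simp_rw [hS', ← mul_sum]
    rw [Fin.sum_univ_eq_sum_range (fun j ↦ tFn s (((k : ℕ) : ℤ) - j).natAbs)]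
    exact mul_pos hc (Acoef_mul_sum_range_tFn_natAbs_pos hs hs' k.isLt)

theorem stmt12 (s : ℝ) (hs : s ∈ Set.Ioo (0 : ℝ) 1) (hs' : s ≠ 1 / 2)
    (hrange : 1 / 2 < s ∨ t1 s ≤ 0)
    (h : ℝ) (hh : 0 < h) (N : ℕ) (hN : 2 ≤ N)
    (S : Matrix (Fin (N - 1)) (Fin (N - 1)) ℝ)
    (hS : ∀ k j, S k j =
      Acoef s * h ^ (1 - 2 * s) * tFn s (((k : ℕ) : ℤ) - ((j : ℕ) : ℤ)).natAbs) :
    (∀ k, 0 < S k k) ∧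
    (∀ k j, k ≠ j → S k j ≤ 0) ∧
    (∀ k j : Fin (N - 1), 2 ≤ (((k : ℕ) : ℤ) - ((j : ℕ) : ℤ)).natAbs → S k j < 0) ∧
    (∀ k j : Fin (N - 1), (((k : ℕ) : ℤ) - ((j : ℕ) : ℤ)).natAbs = 1 → t1 s ≠ 0 → S k j < 0) ∧
    (∀ k, ∑ j ∈ Finset.univ.filter (fun j => j ≠ k), |S k j| < S k k) :=
  stmt12_general s hs hs' hrange h hh N S hS
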